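/- For every CF program p there is a polynomial π such that #Reach_p(x) ≤ π(|x|) for all x ∈ {0,1}*; concretely, every m-ary defined function of p is reachable on at most (3 + |x|)^m distinct argument tuples, since each argument ranges over V_x, a set of at most 3 + |x| values. -/

import Mathlib

/-! # Cons-free programs (CF / CFTR / CFpoly / NCF) and Turing-machine complexity classes -/

/-- Values: booleans and bit strings. -/
inductive Val : Type
  | bool : Bool → Val
  | str  : List Bool → Val
deriving DecidableEq, Inhabited

/-- Base operations of cons-free programs. -/
inductive BOp : Type
  | not | null | head | tail
deriving DecidableEq, Inhabited

/-- Expressions.  `amb` is the nondeterministic choice construct of NCF;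
CF programs are exactly the choice-free programs. -/
inductive Exp : Type
  | tt   : Exp
  | ff   : Exp
  | nil  : Exp
  | var  : Nat → Exp
  | base : BOp → Exp → Exp
  | ite  : Exp → Exp → Exp → Exp
  | call : Nat → List Exp → Exp
  | amb  : Exp → Exp → Exp
deriving Inhabited

/-- A function definition `f x1 ... xm = e`: arity `m` and body `e`
(variables are de Bruijn-style indices into the argument list). -/
structure Defn where
  arity : Nat
  body  : Exp
deriving Inhabited

/-- A program is a finite list of function definitions; the first one is the entry point. -/
abbrev Prog := List Defn

/-- Body of the entry (first) function. -/
def Prog.entry (p : Prog) : Exp := p.headI.body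

/-- Semantics of the base functions (partial). -/
def evalBase : BOp → Val → Option Val
  | .not,  .bool b       => some (.bool (!b))
  | .null, .str s        => some (.bool s.isEmpty)
  | .head, .str (b :: _) => some (.bool b)
  | .tail, .str (_ :: s) => some (.str s)
  | _,     _             => none

/- Call-by-value big-step semantics.  `EvalH p ρ e v n h` means: in environment `ρ`
the expression `e` evaluates to `v`, by a computation (proof) tree with `n` nodes
whose call history (the sequence of configurations `(f, arguments)` of calls to
program-defined functions, in evaluation order) is `h`. -/
mutual
inductive EvalH (p : Prog) : List Val → Exp → Val → Nat → List (Nat × List Val) → Prop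
  | tt  {ρ} : EvalH p ρ .tt (.bool true) 1 []
  | ff  {ρ} : EvalH p ρ .ff (.bool false) 1 []
  | nil {ρ} : EvalH p ρ .nil (.str []) 1 []
  | var {ρ : List Val} {i : Nat} {v} : ρ[i]? = some v → EvalH p ρ (.var i) v 1 []
  | base {ρ op e v w n h} :
      EvalH p ρ e v n h → evalBase op v = some w →
      EvalH p ρ (.base op e) w (n + 1) h
  | iteT {ρ e0 e1 e2 v n0 n1 h0 h1} :
      EvalH p ρ e0 (.bool true) n0 h0 → EvalH p ρ e1 v n1 h1 →
      EvalH p ρ (.ite e0 e1 e2) v (n0 + n1 + 1) (h0 ++ h1)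
  | iteF {ρ e0 e1 e2 v n0 n2 h0 h2} :
      EvalH p ρ e0 (.bool false) n0 h0 → EvalH p ρ e2 v n2 h2 →
      EvalH p ρ (.ite e0 e1 e2) v (n0 + n2 + 1) (h0 ++ h2)
  | ambL {ρ e1 e2 v n h} :
      EvalH p ρ e1 v n h → EvalH p ρ (.amb e1 e2) v (n + 1) h
  | ambR {ρ e1 e2 v n h} :
      EvalH p ρ e2 v n h → EvalH p ρ (.amb e1 e2) v (n + 1) h
  | call {ρ : List Val} {f : Nat} {es ws d v m n hs h} :
      p[f]? = some d → EvalArgsH p ρ es ws m hs → ws.length = d.arity →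
      EvalH p ws d.body v n h →
      EvalH p ρ (.call f es) v (m + n + 1) (hs ++ (f, ws) :: h)

inductive EvalArgsH (p : Prog) : List Val → List Exp → List Val → Nat → List (Nat × List Val) → Prop
  | nil {ρ} : EvalArgsH p ρ [] [] 0 []
  | cons {ρ e es v vs n m h hs} :
      EvalH p ρ e v n h → EvalArgsH p ρ es vs m hs →
      EvalArgsH p ρ (e :: es) (v :: vs) (n + m) (h ++ hs)
end

/-- `p, ρ ⊢ e → v`. -/
def Eval (p : Prog) (ρ : List Val) (e : Exp) (v : Val) : Prop := ∃ n h, EvalH p ρ e v n h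

/-- Pointwise evaluation of a list of expressions. -/
def EvalList (p : Prog) (ρ : List Val) (es : List Exp) (ws : List Val) : Prop :=
  List.Forall₂ (Eval p ρ) es ws

/-- `⟦p⟧(x) = v` with computation-tree size `n` and call history `h`. -/
def RunH (p : Prog) (x : List Bool) (v : Val) (n : Nat) (h : List (Nat × List Val)) : Prop :=
  EvalH p [Val.str x] p.entry v n h

/-- `⟦p⟧(x) = v`. -/
def Run (p : Prog) (x : List Bool) (v : Val) : Prop := ∃ n h, RunH p x v n h

/-- `time_p(x) = n`: the computation tree `T^{p,x}` has `n` nodes. -/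
def TimeIs (p : Prog) (x : List Bool) (n : Nat) : Prop := ∃ v h, RunH p x v n h

/-- Deterministic decision: `p` terminates on every input, answering `True` exactly on `X`. -/
def Decides (p : Prog) (X : Set (List Bool)) : Prop :=
  ∀ x : List Bool, (x ∈ X ∧ Run p x (.bool true)) ∨ (x ∉ X ∧ Run p x (.bool false))

/-- Nondeterministic decision: `x ∈ X` iff some computation `⟦p⟧(x) ⇝ True` exists. -/
def NDecides (p : Prog) (X : Set (List Bool)) : Prop :=
  ∀ x : List Bool, x ∈ X ↔ Run p x (.bool true)

/-- `Reach_p(x)`: configurations `(f, ρ)` called at least once in some computation of `p` on `x`. -/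
def Reach (p : Prog) (x : List Bool) : Set (Nat × List Val) :=
  {c | ∃ v n h, RunH p x v n h ∧ c ∈ h}

/-- `V_x = {0,1} ∪ suffixes(x)`: the range of variation on input `x`. -/
def Vx (x : List Bool) : Set Val :=
  {v | (∃ b, v = .bool b) ∨ ∃ s, v = .str s ∧ s <:+ x}

/-- An expression is choice-free (belongs to the CF fragment). -/
inductive NoChoice : Exp → Prop
  | tt : NoChoice .tt
  | ff : NoChoice .ff
  | nil : NoChoice .nil
  | var (i) : NoChoice (.var i)
  | base (op) {e} : NoChoice e → NoChoice (.base op e)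
  | ite {a b c} : NoChoice a → NoChoice b → NoChoice c → NoChoice (.ite a b c)
  | call (f) {es} : (∀ e ∈ es, NoChoice e) → NoChoice (.call f es)

/-- A CF program: a cons-free program with no nondeterministic choice. -/
def CFProg (p : Prog) : Prop := ∀ d ∈ p, NoChoice d.body

/-- Does the expression contain a call to a program-defined function? -/
def hasCall : Exp → Bool
  | .base _ e => hasCall e
  | .ite a b c => hasCall a || hasCall b || hasCall c
  | .call _ _ => true
  | .amb a b => hasCall a || hasCall b
  | _ => false

/-- The classification map `α` with `X = 0 < T = 1 < N = 2`:
`α e = 0` if `e` has no calls; `α e = 1` if all calls in `e` are in tail position;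
`α e = 2` otherwise. -/
def alpha : Exp → Nat
  | .base _ e => if hasCall e then 2 else 0
  | .ite a b c => if hasCall a then 2 else max (alpha b) (alpha c)
  | .call _ es => if es.all (fun e => !hasCall e) then 1 else 2
  | .amb a b => max (alpha a) (alpha b)
  | _ => 0

/-- All calls in every definition body are in tail position (`α(e^f) ∈ {X, T}`). -/
def TRProg (p : Prog) : Prop := ∀ d ∈ p, alpha d.body ≤ 1

/-- A CFTR program: a tail-recursive cons-free program. -/
def CFTRProg (p : Prog) : Prop := CFProg p ∧ TRProg p

/-- Every call in the program is a tail call or a linear call, i.e. no call to a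
defined function is nested inside the argument of another call. -/
def linearOnly : Exp → Bool
  | .base _ e => linearOnly e
  | .ite a b c => linearOnly a && linearOnly b && linearOnly c
  | .call _ es => es.all (fun e => !hasCall e)
  | .amb a b => linearOnly a && linearOnly b
  | _ => true

/-- A CFpoly program: a CF program that terminates on all inputs, in polynomial native time. -/
def CFpolyProg (p : Prog) : Prop :=
  CFProg p ∧ (∀ x, ∃ v, Run p x v) ∧
    ∃ π : Polynomial ℕ, ∀ x n, TimeIs p x n → n ≤ π.eval x.length

/-- A judgment `p, ρ ⊢ e → v` occurs in the computation tree `T^{p,x}`. -/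
inductive Occurs (p : Prog) (x : List Bool) : List Val → Exp → Val → Prop
  | root {v} : Eval p [Val.str x] p.entry v → Occurs p x [Val.str x] p.entry v
  | base {ρ op e v w} : Occurs p x ρ (.base op e) v → Eval p ρ e w → Occurs p x ρ e w
  | iteTest {ρ a b c v w} : Occurs p x ρ (.ite a b c) v → Eval p ρ a w → Occurs p x ρ a w
  | iteT {ρ a b c v} : Occurs p x ρ (.ite a b c) v → Eval p ρ a (.bool true) →
      Eval p ρ b v → Occurs p x ρ b v
  | iteF {ρ a b c v} : Occurs p x ρ (.ite a b c) v → Eval p ρ a (.bool false) →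
      Eval p ρ c v → Occurs p x ρ c v
  | ambL {ρ a b v} : Occurs p x ρ (.amb a b) v → Eval p ρ a v → Occurs p x ρ a v
  | ambR {ρ a b v} : Occurs p x ρ (.amb a b) v → Eval p ρ b v → Occurs p x ρ b v
  | arg {ρ f es v e w} : Occurs p x ρ (.call f es) v → e ∈ es → Eval p ρ e w → Occurs p x ρ e w
  | body {ρ f es ws d v} : Occurs p x ρ (.call f es) v → p[f]? = some d →
      EvalList p ρ es ws → Eval p ws d.body v → Occurs p x ws d.body v

/- The deterministic left-to-right bottom-up evaluator, with fuel bounding call depth. -/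
mutual
def evalFuel (p : Prog) : Nat → List Val → Exp → Option Val
  | _, _, .tt => some (.bool true)
  | _, _, .ff => some (.bool false)
  | _, _, .nil => some (.str [])
  | _, ρ, .var i => ρ[i]?
  | k, ρ, .base op e => (evalFuel p k ρ e).bind (evalBase op)
  | k, ρ, .ite a b c =>
      match evalFuel p k ρ a with
      | some (.bool true) => evalFuel p k ρ b
      | some (.bool false) => evalFuel p k ρ c
      | _ => none
  | _, _, .amb _ _ => none
  | k, ρ, .call f es =>
      match evalArgsFuel p k ρ es with
      | some ws =>
          match k, p[f]? with
          | k' + 1, some d => if ws.length = d.arity then evalFuel p k' ws d.body else none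
          | _, _ => none
      | none => none
termination_by k _ e => (k, sizeOf e)
decreasing_by
  all_goals first
    | decreasing_tactic
    | (simp only [wfParam] at *; decreasing_tactic)
    | (simp_wf; apply Prod.Lex.left; simp [wfParam])

def evalArgsFuel (p : Prog) : Nat → List Val → List Exp → Option (List Val)
  | _, _, [] => some []
  | k, ρ, e :: es =>
      match evalFuel p k ρ e, evalArgsFuel p k ρ es with
      | some v, some vs => some (v :: vs)
      | _, _ => none
termination_by k _ es => (k, sizeOf es)
end

/-! ## Turing machines -/

/-- Head moves. -/
inductive Dir : Type
  | L | S | R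
deriving DecidableEq, Inhabited

def Dir.z : Dir → ℤ
  | .L => -1
  | .S => 0
  | .R => 1

/-- A configuration: control state, input-head position, work-head position, work tape. -/
structure Cfg (Q : Type) where
  q : Q
  ipos : ℤ
  wpos : ℤ
  tape : ℤ → Option Bool

/-- The symbol of the read-only input tape at position `i` (blank outside the input). -/
def inputSym (x : List Bool) (i : ℤ) : Option Bool :=
  if 0 ≤ i then x[i.toNat]? else none

/-- A deterministic Turing machine with a read-only input tape and a read-write work tape. -/
structure TM where
  Q : Type
  [fin : Fintype Q]
  [deq : DecidableEq Q]
  δ : Q → Option Bool → Option Bool → Q × Option Bool × Dir × Dir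
  start : Q
  accept : Q
  reject : Q

attribute [instance] TM.fin TM.deq

def TM.init (M : TM) : Cfg M.Q := ⟨M.start, 0, 0, fun _ => none⟩

/-- One deterministic step (the accepting and rejecting states are halting). -/
def TM.step (M : TM) (x : List Bool) (c : Cfg M.Q) : Cfg M.Q :=
  if c.q = M.accept ∨ c.q = M.reject then c
  else
    let r := M.δ c.q (inputSym x c.ipos) (c.tape c.wpos)
    ⟨r.1, c.ipos + r.2.2.1.z, c.wpos + r.2.2.2.z,
      fun j => if j = c.wpos then r.2.1 else c.tape j⟩

/-- Configuration after `t` steps on input `x`. -/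
def TM.conf (M : TM) (x : List Bool) (t : Nat) : Cfg M.Q := (M.step x)^[t] M.init

/-- `M` decides `X`: reaches `accept` on members, `reject` on non-members. -/
def TM.DecidesTM (M : TM) (X : Set (List Bool)) : Prop :=
  ∀ x : List Bool,
    (x ∈ X → ∃ t, (M.conf x t).q = M.accept) ∧ (x ∉ X → ∃ t, (M.conf x t).q = M.reject)

/-- The work head of `M` stays within `s` cells of the origin on input `x`. -/
def TM.SpaceBound (M : TM) (x : List Bool) (s : Nat) : Prop :=
  ∀ t, ((M.conf x t).wpos).natAbs ≤ s

/-- `M` halts within `T` steps on input `x`. -/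
def TM.HaltsIn (M : TM) (x : List Bool) (T : Nat) : Prop :=
  ∃ t ≤ T, (M.conf x t).q = M.accept ∨ (M.conf x t).q = M.reject

/-- LOGSPACE: decidable by a deterministic TM in `O(log n)` work space. -/
def LOGSPACE : Set (Set (List Bool)) :=
  {X | ∃ M : TM, M.DecidesTM X ∧
        ∃ C : Nat, ∀ x, M.SpaceBound x (C * (Nat.log 2 x.length + 1))}

/-- PTIME: decidable by a deterministic TM in time `O(n^k)` for some `k`. -/
def PTIME : Set (Set (List Bool)) :=
  {X | ∃ M : TM, M.DecidesTM X ∧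
        ∃ C k : Nat, ∀ x, M.HaltsIn x (C * (x.length + 1) ^ k)}

/-- A nondeterministic Turing machine (read-only input tape, read-write work tape). -/
structure NTM where
  Q : Type
  [fin : Fintype Q]
  δ : Q → Option Bool → Option Bool → Finset (Q × Option Bool × Dir × Dir)
  start : Q
  accept : Q

attribute [instance] NTM.fin

def NTM.init (M : NTM) : Cfg M.Q := ⟨M.start, 0, 0, fun _ => none⟩

/-- One nondeterministic step. -/
def NTM.Step (M : NTM) (x : List Bool) (c c' : Cfg M.Q) : Prop :=
  ∃ r ∈ M.δ c.q (inputSym x c.ipos) (c.tape c.wpos),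
    c' = ⟨r.1, c.ipos + r.2.2.1.z, c.wpos + r.2.2.2.z,
          fun j => if j = c.wpos then r.2.1 else c.tape j⟩

/-- A step staying within work space `s`. -/
def NTM.StepB (M : NTM) (x : List Bool) (s : Nat) (c c' : Cfg M.Q) : Prop :=
  M.Step x c c' ∧ c'.wpos.natAbs ≤ s

/-- Some computation path within work space `s` accepts `x`. -/
def NTM.AcceptsInSpace (M : NTM) (x : List Bool) (s : Nat) : Prop :=
  ∃ c : Cfg M.Q, Relation.ReflTransGen (M.StepB x s) M.init c ∧ c.q = M.accept

/-- Nondeterministic space classes `NSPACE(O(f))`. -/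
def NSPACEF (f : Nat → Nat) : Set (Set (List Bool)) :=
  {X | ∃ (M : NTM) (C : Nat), ∀ x, x ∈ X ↔ M.AcceptsInSpace x (C * (f x.length + 1))}

/-- NLOGSPACE = NSPACE(O(log n)). -/
def NLOGSPACE : Set (Set (List Bool)) := NSPACEF (Nat.log 2)

/-! ## Decision classes of the programming languages -/

def decideCFTR : Set (Set (List Bool)) := {X | ∃ p : Prog, CFTRProg p ∧ Decides p X}
def decideCF : Set (Set (List Bool)) := {X | ∃ p : Prog, CFProg p ∧ Decides p X}
def decideCFpoly : Set (Set (List Bool)) := {X | ∃ p : Prog, CFpolyProg p ∧ Decides p X}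
def decideNCF : Set (Set (List Bool)) := {X | ∃ p : Prog, NDecides p X}
def decideNCFTR : Set (Set (List Bool)) := {X | ∃ p : Prog, TRProg p ∧ NDecides p X}

/-! Cons-free evaluation never builds new data: every value it produces is a boolean, `[]`, or
obtained from a value of the environment by `tail`. Hence, starting from the input `x`, all
values, and in particular all arguments of calls, lie in `V_x`, a set of at most `3 + |x|`
elements, and an `m`-ary function has at most `(3 + |x|)^m` argument tuples. -/

def BaseClosed (S : Set Val) : Prop :=
  (∀ b, Val.bool b ∈ S) ∧ Val.str [] ∈ S ∧ ∀ op v w, evalBase op v = some w → v ∈ S → w ∈ S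

def CallOver (p : Prog) (S : Set Val) (c : Nat × List Val) : Prop :=
  ∃ d, p[c.1]? = some d ∧ c.2.length = d.arity ∧ ∀ u ∈ c.2, u ∈ S

theorem Vx_eq_coe_finset (x : List Bool) :
    Vx x = ↑(Finset.univ.image Val.bool ∪ x.tails.toFinset.image Val.str) := by
  ext v
  cases v <;> simp [Vx, List.mem_tails]

theorem Vx_finite (x : List Bool) : (Vx x).Finite := by
  rw [Vx_eq_coe_finset]
  exact Finset.finite_toSet _

theorem ncard_Vx_le (x : List Bool) : (Vx x).ncard ≤ 3 + x.length := by
  rw [Vx_eq_coe_finset, Set.ncard_coe_finset]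
  calc _ ≤ (Finset.univ.image Val.bool).card + (x.tails.toFinset.image Val.str).card :=
        Finset.card_union_le _ _
    _ ≤ Fintype.card Bool + x.tails.length :=
        add_le_add Finset.card_image_le (Finset.card_image_le.trans (List.toFinset_card_le _))
    _ = 3 + x.length := by rw [Fintype.card_bool, List.length_tails]; omega

theorem baseClosed_Vx (x : List Bool) : BaseClosed (Vx x) := by
  refine ⟨fun b => Or.inl ⟨b, rfl⟩, Or.inr ⟨[], rfl, List.nil_suffix⟩, ?_⟩
  rintro op v w hop (⟨b, rfl⟩ | ⟨s, rfl, hs⟩)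
  · cases op <;> simp only [evalBase, Option.some.injEq, reduceCtorEq] at hop
    exact Or.inl ⟨_, hop.symm⟩
  · cases op <;> cases s <;> simp only [evalBase, Option.some.injEq, reduceCtorEq] at hop <;>
      subst hop
    · exact Or.inl ⟨_, rfl⟩
    · exact Or.inl ⟨_, rfl⟩
    · exact Or.inl ⟨_, rfl⟩
    · exact Or.inr ⟨_, rfl, (List.suffix_cons _ _).trans hs⟩

section Tuples

variable {α : Type*} (S : Set α)

theorem setOf_length_zero_forall_mem :
    {l : List α | l.length = 0 ∧ ∀ a ∈ l, a ∈ S} = {[]} := by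
  ext l
  cases l <;> simp

theorem setOf_length_succ_forall_mem (m : ℕ) :
    {l : List α | l.length = m + 1 ∧ ∀ a ∈ l, a ∈ S} =
      (fun q : α × List α => q.1 :: q.2) '' (S ×ˢ {l | l.length = m ∧ ∀ a ∈ l, a ∈ S}) := by
  ext l
  cases l <;> simp [and_assoc, and_left_comm]

theorem ncard_setOf_length_forall_mem (m : ℕ) :
    {l : List α | l.length = m ∧ ∀ a ∈ l, a ∈ S}.ncard = S.ncard ^ m := by
  induction m with
  | zero => rw [setOf_length_zero_forall_mem, Set.ncard_singleton, pow_zero]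
  | succ m ih =>
    rw [setOf_length_succ_forall_mem, Set.ncard_image_of_injective _ (fun _ _ h => by
      simpa [Prod.ext_iff] using h), Set.ncard_prod, ih, pow_succ']

theorem Set.Finite.setOf_length_forall_mem {S : Set α} (hS : S.Finite) (m : ℕ) :
    {l : List α | l.length = m ∧ ∀ a ∈ l, a ∈ S}.Finite := by
  induction m with
  | zero => rw [setOf_length_zero_forall_mem]; exact Set.finite_singleton _
  | succ m ih =>
    rw [setOf_length_succ_forall_mem]
    exact (hS.prod ih).image _

end Tuples

section Closure

variable {p : Prog} {S : Set Val}

mutual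
theorem EvalH.mem_of_baseClosed (hS : BaseClosed S) {ρ e v n h} :
    EvalH p ρ e v n h → (∀ u ∈ ρ, u ∈ S) → v ∈ S ∧ ∀ c ∈ h, CallOver p S c
  | .tt, _ => ⟨hS.1 _, by simp⟩
  | .ff, _ => ⟨hS.1 _, by simp⟩
  | .nil, _ => ⟨hS.2.1, by simp⟩
  | .var hv, hρ => ⟨hρ _ (List.mem_of_getElem? hv), by simp⟩
  | .base He hop, hρ =>
    have IH := EvalH.mem_of_baseClosed hS He hρ
    ⟨hS.2.2 _ _ _ hop IH.1, IH.2⟩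
  | .iteT H0 H1, hρ | .iteF H0 H1, hρ =>
    have IH0 := EvalH.mem_of_baseClosed hS H0 hρ
    have IH1 := EvalH.mem_of_baseClosed hS H1 hρ
    ⟨IH1.1, List.forall_mem_append.2 ⟨IH0.2, IH1.2⟩⟩
  | .ambL He, hρ | .ambR He, hρ => EvalH.mem_of_baseClosed hS He hρ
  | .call hf Hargs hlen Hbody, hρ =>
    have IHargs := EvalArgsH.mem_of_baseClosed hS Hargs hρ
    have IHbody := EvalH.mem_of_baseClosed hS Hbody IHargs.1
    ⟨IHbody.1, List.forall_mem_append.2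
      ⟨IHargs.2, List.forall_mem_cons.2 ⟨⟨_, hf, hlen, IHargs.1⟩, IHbody.2⟩⟩⟩

theorem EvalArgsH.mem_of_baseClosed (hS : BaseClosed S) {ρ es vs n hs} :
    EvalArgsH p ρ es vs n hs → (∀ u ∈ ρ, u ∈ S) →
      (∀ u ∈ vs, u ∈ S) ∧ ∀ c ∈ hs, CallOver p S c
  | .nil, _ => by simp
  | .cons He Hes, hρ =>
    have IH := EvalH.mem_of_baseClosed hS He hρ
    have IHs := EvalArgsH.mem_of_baseClosed hS Hes hρ
    ⟨List.forall_mem_cons.2 ⟨IH.1, IHs.1⟩, List.forall_mem_append.2 ⟨IH.2, IHs.2⟩⟩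
end

end Closure

section Reach

variable {p : Prog} {x : List Bool}

theorem callOver_Vx_of_mem_reach {c : Nat × List Val} (hc : c ∈ Reach p x) :
    CallOver p (Vx x) c := by
  obtain ⟨v, n, h, hrun, hmem⟩ := hc
  have hinput : ∀ u ∈ [Val.str x], u ∈ Vx x :=
    List.forall_mem_singleton.2 (Or.inr ⟨x, rfl, List.suffix_refl x⟩)
  exact (hrun.mem_of_baseClosed (baseClosed_Vx x) hinput).2 c hmem

theorem setOf_mem_reach_subset {f : Nat} {d : Defn} (hf : p[f]? = some d) :
    {ρ | (f, ρ) ∈ Reach p x} ⊆ {l | l.length = d.arity ∧ ∀ a ∈ l, a ∈ Vx x} := by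
  intro ρ hρ
  obtain ⟨d', hf', hlen, hρ⟩ := callOver_Vx_of_mem_reach hρ
  cases hf.symm.trans hf'
  exact ⟨hlen, hρ⟩

theorem finite_setOf_mem_reach {f : Nat} {d : Defn} (hf : p[f]? = some d) :
    {ρ | (f, ρ) ∈ Reach p x}.Finite :=
  ((Vx_finite x).setOf_length_forall_mem _).subset (setOf_mem_reach_subset hf)

theorem ncard_setOf_mem_reach_le {f : Nat} {d : Defn} (hf : p[f]? = some d) :
    {ρ | (f, ρ) ∈ Reach p x}.ncard ≤ (3 + x.length) ^ d.arity :=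
  calc _ ≤ {l | l.length = d.arity ∧ ∀ a ∈ l, a ∈ Vx x}.ncard :=
        Set.ncard_le_ncard (setOf_mem_reach_subset hf) ((Vx_finite x).setOf_length_forall_mem _)
    _ = (Vx x).ncard ^ d.arity := ncard_setOf_length_forall_mem _ _
    _ ≤ (3 + x.length) ^ d.arity := Nat.pow_le_pow_left (ncard_Vx_le x) _

theorem reach_eq_iUnion :
    Reach p x = ⋃ i : Fin p.length, Prod.mk (i : Nat) '' {ρ | ((i : Nat), ρ) ∈ Reach p x} := by
  ext ⟨f, ρ⟩
  simp only [Set.mem_iUnion, Set.mem_image, Set.mem_ofPred_eq, Prod.mk.injEq]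
  constructor
  · intro hc
    obtain ⟨d, hf, -⟩ := callOver_Vx_of_mem_reach hc
    exact ⟨⟨f, (List.getElem?_eq_some_iff.1 hf).1⟩, ρ, hc, rfl, rfl⟩
  · rintro ⟨i, ρ', hρ', rfl, rfl⟩
    exact hρ'

theorem reach_finite : (Reach p x).Finite := by
  rw [reach_eq_iUnion]
  exact Set.finite_iUnion fun i => (finite_setOf_mem_reach (List.getElem?_eq_getElem i.2)).image _

theorem ncard_reach_le :
    (Reach p x).ncard ≤ ∑ i : Fin p.length, (3 + x.length) ^ p[i].arity := by
  rw [reach_eq_iUnion]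
  refine (Set.ncard_iUnion_le_of_fintype _).trans (Finset.sum_le_sum fun i _ => ?_)
  rw [Set.ncard_image_of_injective _ (Prod.mk_right_injective _)]
  exact ncard_setOf_mem_reach_le (List.getElem?_eq_getElem i.2)

end Reach

/-- for every CF program `p` there is a polynomial `π` with
`#Reach_p(x) ≤ π(|x|)` for all inputs `x`; concretely, every `m`-ary defined function
is reachable on at most `(3 + |x|)^m` distinct argument tuples. -/
theorem reach_polynomially_bounded (p : Prog) (hp : CFProg p) :
    (∃ π : Polynomial ℕ, ∀ x : List Bool,
        (Reach p x).Finite ∧ (Reach p x).ncard ≤ π.eval x.length) ∧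
    (∀ (x : List Bool) (f : Nat) (d : Defn), p[f]? = some d →
        {ρ : List Val | (f, ρ) ∈ Reach p x}.ncard ≤ (3 + x.length) ^ d.arity) := by
  refine ⟨⟨∑ i : Fin p.length, (Polynomial.C 3 + Polynomial.X) ^ p[i].arity,
    fun x => ⟨reach_finite, ?_⟩⟩, fun x f d => ncard_setOf_mem_reach_le⟩
  simpa [Polynomial.eval_finsetSum] using ncard_reach_le
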